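/- arXiv:2006.07168 — 8 statements merged into one kernel-verified Lean document; each statement's English description precedes it below -/
import Mathlib

section
/- Let μ be a compactly supported probability measure on ℝ that is not a point mass, and let t > 0. Define Λₜ = {a₀ + i b₀ ∈ ℂ : ∫ dμ(x)/((a₀-x)² + b₀²) > 1/t}. If z₁, z₂ lie in the complement of Λₜ (i.e., ∫ dμ(x)/|zⱼ - x|² ≤ 1/t for j = 1,2) and z₁ ≠ z₂, then ∫ dμ(x)/((z₁-x)(z₂-x)) ≠ -1/t. -/
/-!
Write `u = (z₁ - x)⁻¹` and `v = (z₂ - x)⁻¹`. Pointwise,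
`Re (u v) + (|u|² + |v|²) / 2 = |u + v̄|² / 2 ≥ 0`, so integrating against `μ` and using the two
hypotheses gives `Re ∫ u v dμ ≥ -1/t`. Equality forces `u + v̄ = 0`, i.e. `2x = z₁ + z̄₂`,
for `μ`-almost every `x`; hence `μ` would be a point mass.
-/

open MeasureTheory ComplexConjugate
open scoped ENNReal

lemma integrable_and_integral_le_of_lintegral_ofReal_le {α : Type*} [MeasurableSpace α]
    {μ : Measure α} {f : α → ℝ} {c : ℝ} (hf : AEStronglyMeasurable f μ) (hf₀ : 0 ≤ᵐ[μ] f)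
    (hc : 0 ≤ c) (h : ∫⁻ x, ENNReal.ofReal (f x) ∂μ ≤ ENNReal.ofReal c) :
    Integrable f μ ∧ ∫ x, f x ∂μ ≤ c := by
  refine ⟨⟨hf, (hasFiniteIntegral_iff_ofReal hf₀).2 (h.trans_lt ENNReal.ofReal_lt_top)⟩, ?_⟩
  rw [integral_eq_lintegral_of_nonneg_ae hf₀ hf]
  exact ENNReal.toReal_le_of_le_ofReal hc h

namespace Complex

lemma norm_inv_mul_le (w₁ w₂ : ℂ) :
    ‖(w₁ * w₂)⁻¹‖ ≤ (1 / ‖w₁‖ ^ 2 + 1 / ‖w₂‖ ^ 2) / 2 := by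
  rw [mul_inv, norm_mul, one_div, one_div, ← inv_pow, ← inv_pow, ← norm_inv, ← norm_inv]
  nlinarith [two_mul_le_add_sq ‖w₁⁻¹‖ ‖w₂⁻¹‖]

lemma re_inv_mul_add_half_inv_sq_norm (w₁ w₂ : ℂ) :
    ((w₁ * w₂)⁻¹).re + (1 / ‖w₁‖ ^ 2 + 1 / ‖w₂‖ ^ 2) / 2 = ‖w₁⁻¹ + conj w₂⁻¹‖ ^ 2 / 2 := by
  rw [Complex.sq_norm (w₁⁻¹ + _), normSq_add, conj_conj, normSq_conj, mul_inv, one_div, one_div,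
    ← inv_pow, ← inv_pow, ← norm_inv, ← norm_inv, Complex.sq_norm, Complex.sq_norm]
  ring

lemma two_mul_eq_add_of_inv_sub_add_inv_sub_eq_zero {a b x : ℂ}
    (h : (a - x)⁻¹ + (b - x)⁻¹ = 0) : 2 * x = a + b := by
  rw [add_eq_zero_iff_eq_neg, ← inv_neg, inv_inj, neg_sub] at h
  linear_combination -h

end Complex

lemma ae_inv_add_conj_inv_eq_zero_of_re_integral_inv_mul_eq {α : Type*} [MeasurableSpace α]
    {μ : Measure α} {w₁ w₂ : α → ℂ} (hw₁ : Measurable w₁) (hw₂ : Measurable w₂) {c : ℝ}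
    (hc : 0 ≤ c) (h₁ : ∫⁻ x, ENNReal.ofReal (1 / ‖w₁ x‖ ^ 2) ∂μ ≤ ENNReal.ofReal c)
    (h₂ : ∫⁻ x, ENNReal.ofReal (1 / ‖w₂ x‖ ^ 2) ∂μ ≤ ENNReal.ofReal c)
    (h : (∫ x, (w₁ x * w₂ x)⁻¹ ∂μ).re = -c) :
    ∀ᵐ x ∂μ, (w₁ x)⁻¹ + conj (w₂ x)⁻¹ = 0 := by
  have hm₁ : Measurable fun x => 1 / ‖w₁ x‖ ^ 2 := measurable_const.div (hw₁.norm.pow_const 2)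
  obtain ⟨hi₁, hI₁⟩ := integrable_and_integral_le_of_lintegral_ofReal_le
    hm₁.aestronglyMeasurable (ae_of_all _ fun x => by positivity) hc h₁
  have hm₂ : Measurable fun x => 1 / ‖w₂ x‖ ^ 2 := measurable_const.div (hw₂.norm.pow_const 2)
  obtain ⟨hi₂, hI₂⟩ := integrable_and_integral_le_of_lintegral_ofReal_le
    hm₂.aestronglyMeasurable (ae_of_all _ fun x => by positivity) hc h₂
  have hmean : Integrable (fun x => (1 / ‖w₁ x‖ ^ 2 + 1 / ‖w₂ x‖ ^ 2) / 2) μ :=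
    (hi₁.add hi₂).div_const 2
  have hf : Integrable (fun x => (w₁ x * w₂ x)⁻¹) μ :=
    hmean.mono' (hw₁.mul hw₂).inv.aestronglyMeasurable
      (ae_of_all _ fun x => Complex.norm_inv_mul_le _ _)
  have hre : Integrable (fun x => ((w₁ x * w₂ x)⁻¹).re) μ := hf.re
  set G : α → ℝ := fun x => ‖(w₁ x)⁻¹ + conj (w₂ x)⁻¹‖ ^ 2 / 2
  have hG : G = fun x => ((w₁ x * w₂ x)⁻¹).re + (1 / ‖w₁ x‖ ^ 2 + 1 / ‖w₂ x‖ ^ 2) / 2 :=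
    funext fun x => (Complex.re_inv_mul_add_half_inv_sq_norm _ _).symm
  have hG_int : Integrable G μ := hG ▸ hre.add hmean
  have hG_zero : ∫ x, G x ∂μ = 0 := by
    refine le_antisymm ?_ (integral_nonneg fun x => by positivity)
    simp only [hG]
    rw [integral_add hre hmean, integral_div, integral_add hi₁ hi₂]
    have : ∫ x, ((w₁ x * w₂ x)⁻¹).re ∂μ = -c := (integral_re hf).trans h
    linarith
  filter_upwards [(integral_eq_zero_iff_of_nonneg (fun x => by positivity) hG_int).1 hG_zero]
    with x hx
  simpa [G] using hx

lemma MeasureTheory.Measure.eq_dirac_of_ae_eq {α : Type*} [MeasurableSpace α]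
    [MeasurableSingletonClass α] {μ : Measure α} [IsProbabilityMeasure μ] {c : α}
    (h : ∀ᵐ x ∂μ, x = c) : μ = Measure.dirac c := by
  have hc : μ {c} = 1 := (prob_compl_eq_zero_iff (measurableSet_singleton c)).1 (ae_iff.1 h)
  have hμ := (Measure.ae_mem_finset_iff (s := {c})).1 (by simpa using h)
  rwa [Finset.sum_singleton, hc, one_smul] at hμ

theorem stmt_1_general (μ : Measure ℝ) [IsProbabilityMeasure μ]
    (hnd : ∀ c : ℝ, μ ≠ Measure.dirac c)
    (t : ℝ) (ht : 0 < t) (z₁ z₂ : ℂ)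
    (h₁ : ∫⁻ x, ENNReal.ofReal (1 / ‖z₁ - (x : ℂ)‖ ^ 2) ∂μ ≤ ENNReal.ofReal (1 / t))
    (h₂ : ∫⁻ x, ENNReal.ofReal (1 / ‖z₂ - (x : ℂ)‖ ^ 2) ∂μ ≤ ENNReal.ofReal (1 / t)) :
    ∫ x, ((z₁ - (x : ℂ)) * (z₂ - (x : ℂ)))⁻¹ ∂μ ≠ -(1 / (t : ℂ)) := by
  intro h
  have hre : (∫ x, ((z₁ - (x : ℂ)) * (z₂ - (x : ℂ)))⁻¹ ∂μ).re = -(1 / t) := by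
    rw [h]; simp
  have hae := ae_inv_add_conj_inv_eq_zero_of_re_integral_inv_mul_eq
    (by fun_prop) (by fun_prop) (by positivity) h₁ h₂ hre
  refine hnd ((z₁ + conj z₂) / 2).re (Measure.eq_dirac_of_ae_eq ?_)
  filter_upwards [hae] with x hx
  rw [Complex.conj_inv, map_sub, Complex.conj_ofReal] at hx
  have hx₂ : (x : ℂ) = (z₁ + conj z₂) / 2 := by
    linear_combination Complex.two_mul_eq_add_of_inv_sub_add_inv_sub_eq_zero hx / 2
  rw [← hx₂, Complex.ofReal_re]

/-- If `μ` is a compactly supported probability measure on `ℝ` that is not a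
point mass, `t > 0`, and `z₁ ≠ z₂` both satisfy `∫ dμ(x)/|z-x|² ≤ 1/t`, then
`∫ dμ(x)/((z₁-x)(z₂-x)) ≠ -1/t`. -/
theorem stmt_1 (μ : Measure ℝ) [IsProbabilityMeasure μ]
    (K : Set ℝ) (hK : IsCompact K) (hμK : μ Kᶜ = 0)
    (hnd : ∀ c : ℝ, μ ≠ Measure.dirac c)
    (t : ℝ) (ht : 0 < t) (z₁ z₂ : ℂ) (hz : z₁ ≠ z₂)
    (h₁ : ∫⁻ x, ENNReal.ofReal (1 / ‖z₁ - (x : ℂ)‖ ^ 2) ∂μ ≤ ENNReal.ofReal (1 / t))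
    (h₂ : ∫⁻ x, ENNReal.ofReal (1 / ‖z₂ - (x : ℂ)‖ ^ 2) ∂μ ≤ ENNReal.ofReal (1 / t)) :
    ∫ x, ((z₁ - (x : ℂ)) * (z₂ - (x : ℂ)))⁻¹ ∂μ ≠ -(1 / (t : ℂ)) :=
  stmt_1_general μ hnd t ht z₁ z₂ h₁ h₂
end

section
/- Let μ be a compactly supported probability measure on ℝ that is not a point mass. For z = a₀ + i v in the open upper half-plane with ∫ dμ(x)/((a₀-x)² + v²) = 1/t, the derivative of the Cauchy transform satisfies the strict bound |G_μ'(z)| < 1/t, where G_μ'(z) = -∫ dμ(x)/(z-x)². -/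
/-!
Put `w(x) = z - x`, so that `|G_μ'(z)| = |∫ w⁻²dμ| ≤ ∫ |w|⁻² dμ = 1/t`. Equality in the triangle
inequality for integrals forces `w(x)⁻²` to point in one fixed direction for `μ`-a.e. `x`. Since all
`w(x)` lie in the upper half-plane with the same imaginary part `v`, two of them whose squares are
positive multiples of each other coincide, so `μ` would be concentrated at a single point.
-/

open MeasureTheory ComplexOrder

lemma MeasureTheory.Measure.exists_eq_dirac_of_ae_mem {α : Type*} [MeasurableSpace α]
    [MeasurableSingletonClass α] {μ : Measure α} [IsProbabilityMeasure μ] {s : Set α}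
    (hs : s.Subsingleton) (h : ∀ᵐ x ∂μ, x ∈ s) : ∃ a, μ = dirac a := by
  obtain ⟨a, ha⟩ := h.exists
  have hμ : μ = μ {a} • dirac a := by
    simpa using Measure.ae_mem_finset_iff (s := {a}) |>.1 (h.mono fun x hx ↦ by simp [hs hx ha])
  have hμa : μ {a} = 1 := by simpa using (congrArg (· Set.univ) hμ).symm
  exact ⟨a, by rw [hμ, hμa, one_smul]⟩

namespace Complex

lemma exists_ne_zero_ae_nonneg_mul_of_norm_integral_eq {α : Type*} [MeasurableSpace α]
    {μ : Measure α} {f : α → ℂ} (hf : Integrable f μ) (h : ‖∫ x, f x ∂μ‖ = ∫ x, ‖f x‖ ∂μ) :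
    ∃ c : ℂ, c ≠ 0 ∧ ∀ᵐ x ∂μ, 0 ≤ c * f x := by
  set I := ∫ x, f x ∂μ
  set c := exp (↑(-I.arg) * Complex.I)
  have hc_norm : ‖c‖ = 1 := norm_exp_ofReal_mul_I _
  have hcI : c * I = ‖I‖ := by
    conv_lhs => rw [← norm_mul_exp_arg_mul_I I]
    rw [mul_left_comm, ← exp_add, ofReal_neg, neg_mul, neg_add_cancel, exp_zero, mul_one]
  have hcf : Integrable (fun x ↦ c * f x) μ := hf.const_mul c
  have hcf_re : Integrable (fun x ↦ (c * f x).re) μ := hcf.re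
  have hre_le : ∀ x, (c * f x).re ≤ ‖f x‖ := fun x ↦
    (re_le_norm _).trans_eq (by rw [norm_mul, hc_norm, one_mul])
  have hint_re : ∫ x, (c * f x).re ∂μ = ‖I‖ := by
    rw [← ofReal_re ‖I‖, ← hcI, ← integral_const_mul]
    exact integral_re hcf
  have hgap : ∫ x, (‖f x‖ - (c * f x).re) ∂μ = 0 := by
    rw [integral_sub hf.norm hcf_re, hint_re, h, sub_self]
  refine ⟨c, norm_ne_zero_iff.1 (by rw [hc_norm]; exact one_ne_zero), ?_⟩
  filter_upwards [(integral_eq_zero_iff_of_nonneg (fun x ↦ sub_nonneg.2 (hre_le x))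
    (hf.norm.sub hcf_re)).1 hgap] with x hx
  rw [← re_eq_norm, norm_mul, hc_norm, one_mul]
  exact (sub_eq_zero.1 hx).symm

lemma norm_integral_lt_integral_norm {α : Type*} [MeasurableSpace α]
    [MeasurableSingletonClass α] {μ : Measure α} [IsProbabilityMeasure μ] {f : α → ℂ}
    (hf : Integrable f μ) (hμ : ∀ a, μ ≠ Measure.dirac a)
    (hf_ray : ∀ c : ℂ, c ≠ 0 → {x | 0 ≤ c * f x}.Subsingleton) :
    ‖∫ x, f x ∂μ‖ < ∫ x, ‖f x‖ ∂μ :=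
  (norm_integral_le_integral_norm f).lt_of_ne fun h ↦ by
    obtain ⟨c, hc, hae⟩ := exists_ne_zero_ae_nonneg_mul_of_norm_integral_eq hf h
    obtain ⟨a, rfl⟩ := Measure.exists_eq_dirac_of_ae_mem (hf_ray c hc) hae
    exact hμ a rfl

lemma eq_of_im_eq_of_nonneg_div_sq {u w : ℂ} (hu : 0 < u.im) (him : u.im = w.im)
    (h : 0 ≤ (w / u) ^ 2) : u = w := by
  have hu₀ : u ≠ 0 := fun h₀ ↦ by simp [h₀] at hu
  set q := w / u
  have hq_im : q.im = 0 := by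
    obtain ⟨hre, him⟩ := nonneg_iff.1 h
    simp only [sq, mul_re, mul_im] at hre him
    by_contra hne
    have hq_re : q.re = 0 := (mul_eq_zero.1 (by linarith : q.re * q.im = 0)).resolve_right hne
    nlinarith [mul_self_pos.2 hne]
  have hw : w = q.re * u := by
    rw [show (q.re : ℂ) = q from ext rfl (by simp [hq_im]), div_mul_cancel₀ _ hu₀]
  have hq_re : q.re = 1 := by
    have := congrArg im hw
    rw [im_ofReal_mul, ← him] at this
    nlinarith
  rw [hw, hq_re, ofReal_one, one_mul]

lemma subsingleton_setOf_nonneg_mul_inv_sq_sub_ofReal {z c : ℂ} (hz : 0 < z.im) (hc : c ≠ 0) :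
    {x : ℝ | 0 ≤ c * ((z - x) ^ 2)⁻¹}.Subsingleton := by
  intro x hx y hy
  have hne : ∀ r : ℝ, z - r ≠ 0 := fun r h₀ ↦ by
    have := congrArg im h₀
    simp only [sub_im, ofReal_im, sub_zero, zero_im] at this
    linarith
  have hsq : ((z - y) / (z - x)) ^ 2 = c * ((z - x) ^ 2)⁻¹ / (c * ((z - y) ^ 2)⁻¹) := by
    field_simp [hne x, hne y]
  have := eq_of_im_eq_of_nonneg_div_sq (by simpa using hz) (by simp) (hsq ▸ div_nonneg hx hy)
  exact_mod_cast sub_right_injective this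

end Complex

theorem stmt_3_general (μ : Measure ℝ) [IsProbabilityMeasure μ]
    (hnd : ∀ c : ℝ, μ ≠ Measure.dirac c)
    (t a₀ v : ℝ) (hv : 0 < v)
    (hint : ∫ x, 1 / ((a₀ - x) ^ 2 + v ^ 2) ∂μ = 1 / t) :
    ‖-∫ x, (((a₀ : ℂ) + v * Complex.I - (x : ℂ)) ^ 2)⁻¹ ∂μ‖ < 1 / t := by
  set z : ℂ := a₀ + v * Complex.I
  have hz : 0 < z.im := by simpa [z] using hv
  have hnorm : ∀ x : ℝ, ‖((z - x) ^ 2)⁻¹‖ = 1 / ((a₀ - x) ^ 2 + v ^ 2) := fun x ↦ by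
    rw [norm_inv, norm_pow, Complex.sq_norm, Complex.normSq_apply, one_div]
    simp [z, sq]
  have hbound : ∀ x : ℝ, ‖((z - x) ^ 2)⁻¹‖ ≤ 1 / v ^ 2 := fun x ↦ by
    rw [hnorm]
    gcongr
    nlinarith [sq_nonneg (a₀ - x)]
  have hf : Integrable (fun x : ℝ ↦ ((z - x) ^ 2)⁻¹) μ :=
    .of_bound (by fun_prop : Measurable _).aestronglyMeasurable _ (ae_of_all _ hbound)
  rw [norm_neg, ← hint, ← integral_congr_ae (ae_of_all _ hnorm)]
  exact Complex.norm_integral_lt_integral_norm hf hnd fun c hc ↦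
    Complex.subsingleton_setOf_nonneg_mul_inv_sq_sub_ofReal hz hc

/-- For `μ` compactly supported, not a point mass, and `z = a₀ + iv` with
`v > 0` satisfying `∫ dμ(x)/((a₀-x)²+v²) = 1/t`, one has `|G_μ'(z)| < 1/t` where
`G_μ'(z) = -∫ dμ(x)/(z-x)²`. -/
theorem stmt_3 (μ : Measure ℝ) [IsProbabilityMeasure μ]
    (K : Set ℝ) (hK : IsCompact K) (hμK : μ Kᶜ = 0)
    (hnd : ∀ c : ℝ, μ ≠ Measure.dirac c)
    (t a₀ v : ℝ) (ht : 0 < t) (hv : 0 < v)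
    (hint : ∫ x, 1 / ((a₀ - x) ^ 2 + v ^ 2) ∂μ = 1 / t) :
    ‖-∫ x, (((a₀ : ℂ) + v * Complex.I - (x : ℂ)) ^ 2)⁻¹ ∂μ‖ < 1 / t :=
  stmt_3_general μ hnd t a₀ v hv hint
end

section
/- Let μ be a compactly supported probability measure on ℝ and t > 0. If (α, β) ⊆ ℝ is an open interval such that for every a₀ ∈ (α, β) one has ∫ dμ(x)/((a₀-x)²) ≤ 1/t, then μ((α, β)) = 0. -/
/-!
By Tonelli, integrating the hypothesis over `a₀ ∈ (α, β)` bounds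
`∫_{(α,β)} ∫_{(α,β)} (a₀ - x)⁻² da₀ dμ(x)` by `(β - α) / t < ∞`. But the inner integral is
infinite for every `x ∈ (α, β)`, since `(a₀ - x)⁻²` is not integrable near `x`, so the outer
integral can only be finite if `μ((α, β)) = 0`.
-/

open MeasureTheory Set
open scoped ENNReal

theorem measure_eq_zero_of_lintegral_le_of_setLIntegral_eq_top {X : Type*} [MeasurableSpace X]
    {μ ν : Measure X} [SFinite μ] [SFinite ν] {f : X → X → ℝ≥0∞}
    (hf : Measurable (Function.uncurry f)) {s : Set X} (hs : MeasurableSet s) (hνs : ν s ≠ ∞)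
    {C : ℝ≥0∞} (hC : C ≠ ∞) (hbound : ∀ a ∈ s, ∫⁻ x, f x a ∂μ ≤ C)
    (hdiv : ∀ x ∈ s, ∫⁻ a in s, f x a ∂ν = ∞) : μ s = 0 := by
  by_contra hμs
  have h_top : ∫⁻ x, ∫⁻ a in s, f x a ∂ν ∂μ = ∞ := by
    refine top_le_iff.mp (le_trans ?_ (setLIntegral_le_lintegral s _))
    rw [setLIntegral_congr_fun hs hdiv, setLIntegral_const, ENNReal.top_mul hμs]
  have h_fin : ∫⁻ a in s, ∫⁻ x, f x a ∂μ ∂ν ≠ ∞ := by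
    refine ne_top_of_le_ne_top (ENNReal.mul_ne_top hC hνs) ?_
    calc ∫⁻ a in s, ∫⁻ x, f x a ∂μ ∂ν ≤ ∫⁻ _ in s, C ∂ν := setLIntegral_mono measurable_const hbound
      _ = C * ν s := setLIntegral_const s C
  exact h_fin (lintegral_lintegral_swap (μ := μ) (ν := ν.restrict s) hf.aemeasurable ▸ h_top)

theorem ofReal_one_div_le_setLIntegral_Ioo_inv_sq {x r : ℝ} (hr : 0 < r) :
    ENNReal.ofReal (1 / r) ≤ ∫⁻ a in Ioo x (x + r), ENNReal.ofReal (1 / (a - x) ^ 2) := by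
  have hbound : ∀ a ∈ Ioo x (x + r),
      ENNReal.ofReal (1 / r ^ 2) ≤ ENNReal.ofReal (1 / (a - x) ^ 2) := by
    rintro a ⟨hxa, har⟩
    have hpos : 0 < a - x := by linarith
    exact ENNReal.ofReal_le_ofReal
      (one_div_le_one_div_of_le (by positivity) (pow_le_pow_left₀ hpos.le (by linarith) 2))
  calc ENNReal.ofReal (1 / r)
      = ENNReal.ofReal (1 / r ^ 2) * volume (Ioo x (x + r)) := by
        rw [Real.volume_Ioo, add_sub_cancel_left, ← ENNReal.ofReal_mul (by positivity)]
        congr 1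
        field_simp
    _ = ∫⁻ _ in Ioo x (x + r), ENNReal.ofReal (1 / r ^ 2) := (setLIntegral_const _ _).symm
    _ ≤ _ := setLIntegral_mono (by fun_prop) hbound

theorem setLIntegral_Ioo_inv_sq_eq_top {x b : ℝ} (hxb : x < b) :
    ∫⁻ a in Ioo x b, ENNReal.ofReal (1 / (a - x) ^ 2) = ∞ := by
  refine ENNReal.eq_top_of_forall_nnreal_le fun C => ?_
  set r : ℝ := min (b - x) (1 / (C + 1))
  have hr_pos : 0 < r := lt_min (by linarith) (by positivity)
  have hrb : r ≤ b - x := min_le_left _ _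
  have hC : (C : ℝ) + 1 ≤ 1 / r := by
    rw [le_one_div (by positivity) hr_pos]
    exact min_le_right _ _
  calc (C : ℝ≥0∞) = ENNReal.ofReal C := (ENNReal.ofReal_coe_nnreal).symm
    _ ≤ ENNReal.ofReal (1 / r) := ENNReal.ofReal_le_ofReal (by linarith)
    _ ≤ ∫⁻ a in Ioo x (x + r), ENNReal.ofReal (1 / (a - x) ^ 2) :=
        ofReal_one_div_le_setLIntegral_Ioo_inv_sq hr_pos
    _ ≤ _ := lintegral_mono_set (Ioo_subset_Ioo_right (by linarith))

theorem stmt_5_general (μ : Measure ℝ) [IsProbabilityMeasure μ]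
    (t : ℝ) (α β : ℝ)
    (h : ∀ a₀ ∈ Set.Ioo α β,
      ∫⁻ x, ENNReal.ofReal (1 / (a₀ - x) ^ 2) ∂μ ≤ ENNReal.ofReal (1 / t)) :
    μ (Set.Ioo α β) = 0 := by
  refine measure_eq_zero_of_lintegral_le_of_setLIntegral_eq_top (ν := volume)
    (f := fun x a => ENNReal.ofReal (1 / (a - x) ^ 2)) (by fun_prop) measurableSet_Ioo
    (by simp) ENNReal.ofReal_ne_top h fun x hx => ?_
  exact top_le_iff.mp <| setLIntegral_Ioo_inv_sq_eq_top hx.2 ▸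
    lintegral_mono_set (Ioo_subset_Ioo_left hx.1.le)

/-- If for every `a₀` in an open interval `(α, β)` one has
`∫ dμ(x)/(a₀-x)² ≤ 1/t`, then `μ((α,β)) = 0`. -/
theorem stmt_5 (μ : Measure ℝ) [IsProbabilityMeasure μ]
    (K : Set ℝ) (hK : IsCompact K) (hμK : μ Kᶜ = 0)
    (t : ℝ) (ht : 0 < t) (α β : ℝ)
    (h : ∀ a₀ ∈ Set.Ioo α β,
      ∫⁻ x, ENNReal.ofReal (1 / (a₀ - x) ^ 2) ∂μ ≤ ENNReal.ofReal (1 / t)) :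
    μ (Set.Ioo α β) = 0 :=
  stmt_5_general μ t α β h
end

section
/- Let μ = α·δ₁ + β·δ₋₁ with α ∈ (0,1), β = 1 - α, and let t > 0, a ∈ (-1, 1). Suppose a₀ ∈ ℝ and v > 0 satisfy α/((a₀-1)² + v²) + β/((a₀+1)² + v²) = 1/t and α/((a₀-1)² + v²) - β/((a₀+1)² + v²) = a/t. Then a₀ = (t/2)·(a + β - α)/(1 - a²) and v² = Q(a)/(4(1-a²)²), where Q(a) = -4a⁴ + 4t(α-β)a³ - (t² + 4t - 8)a² + 2t(t-2)(α-β)a - (α-β)²t² + 4t - 4. -/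
/-- In the Bernoulli case `μ = α δ₁ + β δ₋₁`, if `a₀ ∈ ℝ` and `v > 0`
solve the defining equations, then `a₀` and `v²` have the stated explicit forms. -/
theorem stmt_9 (α t a a₀ v : ℝ) (hα : α ∈ Set.Ioo (0 : ℝ) 1) (ht : 0 < t)
    (ha : a ∈ Set.Ioo (-1 : ℝ) 1) (hv : 0 < v)
    (β : ℝ) (hβ : β = 1 - α)
    (h1 : α / ((a₀ - 1) ^ 2 + v ^ 2) + β / ((a₀ + 1) ^ 2 + v ^ 2) = 1 / t)
    (h2 : α / ((a₀ - 1) ^ 2 + v ^ 2) - β / ((a₀ + 1) ^ 2 + v ^ 2) = a / t) :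
    a₀ = (t / 2) * (a + β - α) / (1 - a ^ 2) ∧
    v ^ 2 = (-4 * a ^ 4 + 4 * t * (α - β) * a ^ 3 - (t ^ 2 + 4 * t - 8) * a ^ 2
        + 2 * t * (t - 2) * (α - β) * a - (α - β) ^ 2 * t ^ 2 + 4 * t - 4)
      / (4 * (1 - a ^ 2) ^ 2) := by
  obtain ⟨hα0, hα1⟩ := hα
  obtain ⟨ha1, ha2⟩ := ha
  have hβ0 : 0 < β := by rw [hβ]; linarith
  have hApos : (0:ℝ) < (a₀ - 1) ^ 2 + v ^ 2 := by positivity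
  have hBpos : (0:ℝ) < (a₀ + 1) ^ 2 + v ^ 2 := by positivity
  have ht' : t ≠ 0 := ne_of_gt ht
  have e1 : α / ((a₀ - 1) ^ 2 + v ^ 2) * 2 = 1 / t + a / t := by linarith
  have e2 : β / ((a₀ + 1) ^ 2 + v ^ 2) * 2 = 1 / t - a / t := by linarith
  field_simp at e1 e2
  have h1a : (0:ℝ) < 1 + a := by linarith
  have h1a' : (0:ℝ) < 1 - a := by linarith
  have hA : ((a₀ - 1) ^ 2 + v ^ 2) * (1 + a) = 2 * t * α := by linear_combination -e1
  have hB : ((a₀ + 1) ^ 2 + v ^ 2) * (1 - a) = 2 * t * β := by linear_combination -e2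
  have hsq : (1:ℝ) - a ^ 2 ≠ 0 := by nlinarith
  have ha0 : a₀ = (t / 2) * (a + β - α) / (1 - a ^ 2) := by
    field_simp
    linear_combination ((1+a)/2)*hB - ((1-a)/2)*hA + t*a*hβ
  refine ⟨ha0, ?_⟩
  have hv2 : v ^ 2 = 2 * t * α / (1 + a) - (a₀ - 1) ^ 2 := by
    field_simp
    linear_combination hA
  rw [hv2, ha0, hβ]
  field_simp
  ring
end

section
/- Let μ be the semicircular distribution of variance s > 0, whose Cauchy transform is G(z) = (z - √(z² - 4s))/(2s) on the upper half-plane (with the branch of the square root making G(z) → 0 as |z| → ∞). For t > 0, the map H_t(z) = z + t·G(z) satisfies: for q ∈ ℝ with |q| ≤ 2√(s+t), the point z_q = ((2s+t)q + it√(4(s+t) - q²))/(2(s+t)) satisfies H_t(z_q) = q. -/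
/-!
Both `sq z_q` and `w = (tq + i(2s+t)√(4(s+t) - q²)) / (2(s+t))` square to `z_q² - 4s`, and once
`sq z_q = w` the identity `H_t(z_q) = q` is algebra.

To fix the sign, follow the vertical ray `Re z_q + iy`, `y ≥ Im z_q`: there `z² - 4s` does not
vanish and `Im (z² - 4s) = 2y Re z_q` keeps the sign of `Re z_q`, so the root of `z² - 4s` built
from the real square roots of `(|u| ± Re u) / 2` is continuous along the ray, with nonnegative
imaginary part, and equals `w` at its foot. By connectedness `sq` equals this root or its
negative on the whole ray. The minus sign is excluded at infinity: a root `h` of `z² - 4s` with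
`Im h ≥ 0` satisfies `|h / z - 1| ≤ 4s / (Im z)²`, so it is asymptotic to `z`, as `sq` is.
-/

open Complex Filter Set Topology

lemma ofReal_add_mul_I_re (a b : ℝ) : ((a : ℂ) + b * I).re = a := by
  simp only [add_re, ofReal_re, re_ofReal_mul, I_re, mul_zero, add_zero]

lemma ofReal_add_mul_I_im (a b : ℝ) : ((a : ℂ) + b * I).im = b := by
  simp only [add_im, ofReal_im, im_ofReal_mul, I_im, mul_one, zero_add]

lemma ofReal_add_mul_I_sq (a b : ℝ) :
    ((a : ℂ) + b * I) ^ 2 = ((a ^ 2 - b ^ 2 : ℝ) : ℂ) + ((2 * a * b : ℝ) : ℂ) * I := by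
  push_cast
  linear_combination (b : ℂ) ^ 2 * I_sq

/-- For `σ = ±1` this is a square root of `u` on the half-plane `0 ≤ σ * u.im`; unlike the
principal branch it is continuous on all of `ℂ`. -/
noncomputable def sqrtBranch (σ : ℝ) (u : ℂ) : ℂ :=
  (σ * √((‖u‖ + u.re) / 2) : ℝ) + (√((‖u‖ - u.re) / 2) : ℝ) * I

lemma sqrtBranch_re (σ : ℝ) (u : ℂ) : (sqrtBranch σ u).re = σ * √((‖u‖ + u.re) / 2) :=
  ofReal_add_mul_I_re _ _

lemma sqrtBranch_im (σ : ℝ) (u : ℂ) : (sqrtBranch σ u).im = √((‖u‖ - u.re) / 2) :=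
  ofReal_add_mul_I_im _ _

lemma continuous_sqrtBranch (σ : ℝ) : Continuous (sqrtBranch σ) := by
  unfold sqrtBranch
  fun_prop

lemma sq_sqrtBranch {σ : ℝ} (hσ : σ = 1 ∨ σ = -1) {u : ℂ} (hu : 0 ≤ σ * u.im) :
    sqrtBranch σ u ^ 2 = u := by
  have hre_le := abs_le.mp (abs_re_le_norm u)
  have hplus := Real.sq_sqrt (x := (‖u‖ + u.re) / 2) (by linarith)
  have hminus := Real.sq_sqrt (x := (‖u‖ - u.re) / 2) (by linarith)
  have hprod : √((‖u‖ + u.re) / 2) * √((‖u‖ - u.re) / 2) = |u.im| / 2 := by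
    rw [← Real.sqrt_mul (by linarith), ← Real.sqrt_sq (by positivity : 0 ≤ |u.im| / 2)]
    congr 1
    nlinarith [sq_abs u.im, Complex.sq_norm u, Complex.normSq_apply u]
  have hσim : σ * |u.im| = u.im := by
    rcases hσ with rfl | rfl
    · rw [one_mul, abs_of_nonneg (by linarith)]
    · rw [abs_of_nonpos (by linarith)]; ring
  have hσ2 : σ ^ 2 = 1 := by rcases hσ with rfl | rfl <;> norm_num
  apply Complex.ext
  · simp only [pow_two, mul_re, sqrtBranch_re, sqrtBranch_im]
    linear_combination σ ^ 2 * hplus - hminus + (‖u‖ + u.re) / 2 * hσ2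
  · simp only [pow_two, mul_im, sqrtBranch_re, sqrtBranch_im]
    linear_combination 2 * σ * hprod + hσim

lemma sqrtBranch_sq {σ : ℝ} (hσ : σ = 1 ∨ σ = -1) {w : ℂ} (him : 0 ≤ w.im)
    (hre : 0 ≤ σ * w.re) :
    sqrtBranch σ (w ^ 2) = w := by
  have hnorm : ‖w ^ 2‖ = w.re ^ 2 + w.im ^ 2 := by
    rw [norm_pow, Complex.sq_norm, Complex.normSq_apply]; ring
  have hsq_re : (w ^ 2).re = w.re ^ 2 - w.im ^ 2 := by simp [pow_two]
  apply Complex.ext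
  · rw [sqrtBranch_re, hnorm, hsq_re,
      show (w.re ^ 2 + w.im ^ 2 + (w.re ^ 2 - w.im ^ 2)) / 2 = w.re ^ 2 by ring,
      Real.sqrt_sq_eq_abs]
    rcases hσ with rfl | rfl
    · rw [one_mul, abs_of_nonneg (by linarith)]
    · rw [abs_of_nonpos (by linarith)]; ring
  · rw [sqrtBranch_im, hnorm, hsq_re,
      show (w.re ^ 2 + w.im ^ 2 - (w.re ^ 2 - w.im ^ 2)) / 2 = w.im ^ 2 by ring, Real.sqrt_sq him]

lemma exists_sign_mul_nonneg {a b : ℝ} (h : 0 ≤ a * b) :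
    ∃ σ : ℝ, (σ = 1 ∨ σ = -1) ∧ 0 ≤ σ * a ∧ 0 ≤ σ * b := by
  by_cases hab : 0 ≤ a ∧ 0 ≤ b
  · exact ⟨1, .inl rfl, by simpa using hab.1, by simpa using hab.2⟩
  · refine ⟨-1, .inr rfl, ?_, ?_⟩ <;> rw [not_and_or, not_le, not_le] at hab <;>
      rcases hab with hab | hab <;> nlinarith

lemma sq_ne_ofReal_of_im_pos {z : ℂ} (hz : 0 < z.im) {a : ℝ} (ha : 0 ≤ a) : z ^ 2 ≠ a := by
  intro h
  have him : 2 * z.re * z.im = 0 := by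
    have := congrArg im h
    simp only [pow_two, mul_im, ofReal_im] at this
    linarith
  have hx : z.re = 0 := by simpa [hz.ne'] using him
  have hre : z.re ^ 2 - z.im ^ 2 = a := by simpa [pow_two] using congrArg Complex.re h
  nlinarith

lemma norm_div_sub_one_le {z h c : ℂ} (hz : 0 < z.im) (hh : 0 ≤ h.im)
    (hsq : h ^ 2 = z ^ 2 - c) : ‖h / z - 1‖ ≤ ‖c‖ / z.im ^ 2 := by
  have hz0 : z ≠ 0 := fun h0 => by simp [h0] at hz
  have hhz : z.im ≤ ‖h + z‖ := by
    have := im_le_norm (h + z); rw [add_im] at this; linarith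
  have hhz0 : h + z ≠ 0 := norm_pos_iff.mp (hz.trans_le hhz)
  have hdiff : h / z - 1 = -c / ((h + z) * z) := by
    field_simp
    linear_combination hsq
  rw [hdiff, norm_div, norm_neg, norm_mul]
  gcongr
  rw [pow_two]
  exact mul_le_mul hhz (im_le_norm z) hz.le (norm_nonneg _)

lemma tendsto_vertical_ray (x : ℝ) :
    Tendsto (fun y : ℝ => (x : ℂ) + y * I) atTop
      (comap (fun z : ℂ => ‖z‖) atTop ⊓ 𝓟 {z : ℂ | 0 ≤ z.im}) := by
  refine tendsto_inf.mpr ⟨tendsto_comap_iff.mpr ?_, tendsto_principal.mpr ?_⟩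
  · refine tendsto_atTop_mono (fun y => ?_) tendsto_id
    simpa using im_le_norm ((x : ℂ) + y * I)
  · filter_upwards [eventually_ge_atTop 0] with y hy
    simpa using hy

lemma tendsto_div_vertical_ray_of_sq_eq (x : ℝ) (c : ℂ) {g : ℝ → ℂ}
    (hg_sq : ∀ᶠ y in atTop, g y ^ 2 = (x + y * I) ^ 2 - c)
    (hg_im : ∀ᶠ y in atTop, 0 ≤ (g y).im) :
    Tendsto (fun y : ℝ => g y / (x + y * I)) atTop (𝓝 1) := by
  rw [← tendsto_sub_nhds_zero_iff]
  have hbound : Tendsto (fun y : ℝ => ‖c‖ / y ^ 2) atTop (𝓝 0) :=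
    tendsto_const_nhds.div_atTop (tendsto_pow_atTop two_ne_zero)
  refine squeeze_zero_norm' ?_ hbound
  filter_upwards [hg_sq, hg_im, eventually_gt_atTop 0] with y hsq him hy
  simpa using norm_div_sub_one_le (by simpa using hy) him hsq

structure IsUpperSqrtBranch (c : ℂ) (f : ℂ → ℂ) : Prop where
  sq_eq : ∀ z : ℂ, 0 ≤ z.im → f z ^ 2 = z ^ 2 - c
  continuousOn : ContinuousOn f {z : ℂ | 0 ≤ z.im}
  tendsto_div : Tendsto (fun z => f z / z)
    (comap (fun z : ℂ => ‖z‖) atTop ⊓ 𝓟 {z : ℂ | 0 ≤ z.im}) (𝓝 1)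

namespace IsUpperSqrtBranch

variable {c : ℂ} {f : ℂ → ℂ}

lemma eq_of_ray (hf : IsUpperSqrtBranch c f) {x y₀ : ℝ} (hy₀ : 0 ≤ y₀) {g : ℝ → ℂ}
    (hg : ContinuousOn g (Ici y₀)) (hg_sq : ∀ y ∈ Ici y₀, g y ^ 2 = (x + y * I) ^ 2 - c)
    (hg_ne : ∀ y ∈ Ici y₀, g y ≠ 0) (hg_im : ∀ y ∈ Ici y₀, 0 ≤ (g y).im) :
    f (x + y₀ * I) = g y₀ := by
  set Z : ℝ → ℂ := fun y => x + y * I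
  have hZ : MapsTo Z (Ici y₀) {z | 0 ≤ z.im} := fun y hy => by
    simpa [Z] using hy₀.trans hy
  have hfZ : ContinuousOn (f ∘ Z) (Ici y₀) :=
    hf.continuousOn.comp (by fun_prop) hZ
  rcases isPreconnected_Ici.eq_or_eq_neg_of_sq_eq hfZ hg
      (fun y hy => by simp [hf.sq_eq _ (hZ hy), hg_sq y hy, Z]) (hg_ne _) with h | h
  · exact h self_mem_Ici
  · exfalso
    have hlim : Tendsto (fun y => f (Z y) / Z y) atTop (𝓝 (-1)) := by
      refine (tendsto_div_vertical_ray_of_sq_eq (g := g) x c ?_ ?_).neg.congr' ?_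
      · filter_upwards [eventually_ge_atTop y₀] with y hy using hg_sq y hy
      · filter_upwards [eventually_ge_atTop y₀] with y hy using hg_im y hy
      · filter_upwards [eventually_ge_atTop y₀] with y hy
        have hfg : f (Z y) = -g y := h hy
        rw [hfg, neg_div]
    have := tendsto_nhds_unique (hf.tendsto_div.comp (tendsto_vertical_ray x)) hlim
    norm_num at this

theorem eq_of_sq_eq {a : ℝ} (ha : 0 ≤ a) (hf : IsUpperSqrtBranch a f) {z w : ℂ}
    (hz : 0 ≤ z.im) (hw_sq : w ^ 2 = z ^ 2 - a) (hw0 : w ≠ 0) (hw_im : 0 ≤ w.im)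
    (hwz : 0 ≤ w.re * z.re) : f z = w := by
  obtain ⟨σ, hσ, hσw, hσz⟩ := exists_sign_mul_nonneg hwz
  have hU : ∀ y ∈ Ici z.im, (z.re + y * I) ^ 2 - a ≠ 0 := by
    rintro y hy
    rcases (mem_Ici.mp hy).eq_or_lt with rfl | hlt
    · rwa [re_add_im, ← hw_sq, pow_ne_zero_iff two_ne_zero]
    · exact sub_ne_zero.mpr (sq_ne_ofReal_of_im_pos (by simpa using hz.trans_lt hlt) ha)
  have hg_sq : ∀ y ∈ Ici z.im,
      sqrtBranch σ ((z.re + y * I) ^ 2 - a) ^ 2 = (z.re + y * I) ^ 2 - a := by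
    intro y hy
    refine sq_sqrtBranch hσ ?_
    rw [ofReal_add_mul_I_sq, sub_im, ofReal_add_mul_I_im, ofReal_im, sub_zero]
    nlinarith [mul_nonneg hσz (hz.trans hy)]
  have hray := hf.eq_of_ray (g := fun y => sqrtBranch σ ((z.re + y * I) ^ 2 - a)) hz
    ((continuous_sqrtBranch σ).comp (by fun_prop)).continuousOn hg_sq
    (fun y hy h0 => hU y hy (by rw [← hg_sq y hy, h0]; ring))
    (fun y _ => (sqrtBranch_im σ _).symm ▸ Real.sqrt_nonneg _)
  rwa [re_add_im, ← hw_sq, sqrtBranch_sq hσ hw_im hσw] at hray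

end IsUpperSqrtBranch

noncomputable def subordinationPoint (s t q : ℝ) : ℂ :=
  ((2 * s + t) * q / (2 * (s + t)) : ℝ)
    + ((t * √(4 * (s + t) - q ^ 2) / (2 * (s + t)) : ℝ) : ℂ) * I

/-- The value of `√(z² - 4s)` at `z = subordinationPoint s t q`. -/
noncomputable def subordinationSqrt (s t q : ℝ) : ℂ :=
  (t * q / (2 * (s + t)) : ℝ)
    + (((2 * s + t) * √(4 * (s + t) - q ^ 2) / (2 * (s + t)) : ℝ) : ℂ) * I

section subordination

variable {s t q : ℝ}

lemma subordinationSqrt_sq (hst : s + t ≠ 0) (hq : q ^ 2 ≤ 4 * (s + t)) :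
    subordinationSqrt s t q ^ 2 = subordinationPoint s t q ^ 2 - ((4 * s : ℝ) : ℂ) := by
  rw [subordinationSqrt, subordinationPoint, ofReal_add_mul_I_sq, ofReal_add_mul_I_sq]
  have hR := Real.sq_sqrt (sub_nonneg.mpr hq)
  set R := √(4 * (s + t) - q ^ 2)
  have h_re : (t * q / (2 * (s + t))) ^ 2 - ((2 * s + t) * R / (2 * (s + t))) ^ 2
      = ((2 * s + t) * q / (2 * (s + t))) ^ 2 - (t * R / (2 * (s + t))) ^ 2 - 4 * s := by
    field_simp
    linear_combination (-4 * s * (s + t)) * hR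
  have h_im : 2 * (t * q / (2 * (s + t))) * ((2 * s + t) * R / (2 * (s + t)))
      = 2 * ((2 * s + t) * q / (2 * (s + t))) * (t * R / (2 * (s + t))) := by
    ring
  rw [h_re, h_im]
  push_cast
  ring

lemma subordinationSqrt_ne_zero (hs : 0 < s) (ht : 0 < t) (hq : q ^ 2 ≤ 4 * (s + t)) :
    subordinationSqrt s t q ≠ 0 := by
  intro h
  have hst : 2 * (s + t) ≠ 0 := by positivity
  have h_re := congrArg re h
  have h_im := congrArg im h
  rw [subordinationSqrt, ofReal_add_mul_I_re, zero_re] at h_re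
  rw [subordinationSqrt, ofReal_add_mul_I_im, zero_im] at h_im
  have hq0 : q = 0 := by simpa [hst, ht.ne'] using h_re
  have hR0 : √(4 * (s + t) - q ^ 2) = 0 := by
    simpa [hst, (by positivity : 2 * s + t ≠ 0)] using h_im
  have hR := Real.sq_sqrt (sub_nonneg.mpr hq)
  rw [hR0, hq0] at hR
  linarith

theorem IsUpperSqrtBranch.apply_subordinationPoint {f : ℂ → ℂ}
    (hf : IsUpperSqrtBranch ((4 * s : ℝ) : ℂ) f) (hs : 0 < s) (ht : 0 < t)
    (hq : q ^ 2 ≤ 4 * (s + t)) : f (subordinationPoint s t q) = subordinationSqrt s t q := by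
  have hst : 0 < 2 * (s + t) := by positivity
  have h2st : 0 ≤ 2 * s + t := by positivity
  refine hf.eq_of_sq_eq (by positivity) ?_ (subordinationSqrt_sq (by positivity) hq)
    (subordinationSqrt_ne_zero hs ht hq) ?_ ?_ <;>
    simp only [subordinationSqrt, subordinationPoint, ofReal_add_mul_I_re, ofReal_add_mul_I_im]
  · exact div_nonneg (mul_nonneg ht.le (Real.sqrt_nonneg _)) hst.le
  · exact div_nonneg (mul_nonneg h2st (Real.sqrt_nonneg _)) hst.le
  · rw [div_mul_div_comm, mul_mul_mul_comm]
    exact div_nonneg (mul_nonneg (mul_nonneg ht.le h2st) (mul_self_nonneg q)) (by positivity)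

lemma subordinationPoint_add_mul_sub_subordinationSqrt (hs : s ≠ 0) (hst : s + t ≠ 0) :
    subordinationPoint s t q
      + t * ((subordinationPoint s t q - subordinationSqrt s t q) / (2 * s)) = q := by
  have hsC : (s : ℂ) ≠ 0 := ofReal_ne_zero.mpr hs
  have hstC : (s : ℂ) + t ≠ 0 := by exact_mod_cast hst
  simp only [subordinationPoint, subordinationSqrt]
  push_cast
  field_simp
  ring

end subordination

/-- With `G(z) = (z - √(z²-4s))/(2s)` (the branch of the square root on the
closed upper half-plane, continuous there and asymptotic to `z` at infinity) and
`H_t(z) = z + tG(z)`, for real `q` with `|q| ≤ 2√(s+t)` the point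
`z_q = ((2s+t)q + it√(4(s+t)-q²))/(2(s+t))` satisfies `H_t(z_q) = q`. -/
theorem stmt_10 (s t : ℝ) (hs : 0 < s) (ht : 0 < t)
    (sq : ℂ → ℂ)
    (hsq_sq : ∀ z : ℂ, 0 ≤ z.im → sq z ^ 2 = z ^ 2 - 4 * (s : ℂ))
    (hsq_cont : ContinuousOn sq {z : ℂ | 0 ≤ z.im})
    (hsq_asymp : Tendsto (fun z => sq z / z)
      (comap (fun z : ℂ => ‖z‖) atTop ⊓ Filter.principal {z : ℂ | 0 ≤ z.im}) (nhds 1))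
    (q : ℝ) (hq : |q| ≤ 2 * Real.sqrt (s + t)) :
    (fun z : ℂ => z + (t : ℂ) * ((z - sq z) / (2 * (s : ℂ))))
      ((((2 * s + t) * q : ℝ) : ℂ) / (2 * ((s : ℂ) + t))
        + Complex.I * ((t * Real.sqrt (4 * (s + t) - q ^ 2) : ℝ) : ℂ) / (2 * ((s : ℂ) + t)))
      = (q : ℂ) := by
  have hst : 0 < s + t := by linarith
  have hf : IsUpperSqrtBranch ((4 * s : ℝ) : ℂ) sq := by
    push_cast
    exact ⟨hsq_sq, hsq_cont, hsq_asymp⟩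
  have hq2 : q ^ 2 ≤ 4 * (s + t) :=
    calc q ^ 2 = |q| ^ 2 := (sq_abs q).symm
      _ ≤ (2 * √(s + t)) ^ 2 := pow_le_pow_left₀ (abs_nonneg q) hq 2
      _ = 4 * (s + t) := by rw [mul_pow, Real.sq_sqrt hst.le]; norm_num
  have hpoint : (((2 * s + t) * q : ℝ) : ℂ) / (2 * ((s : ℂ) + t))
      + I * ((t * √(4 * (s + t) - q ^ 2) : ℝ) : ℂ) / (2 * ((s : ℂ) + t))
      = subordinationPoint s t q := by
    simp only [subordinationPoint]
    push_cast
    ring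
  show _ + _ * ((_ - sq _) / _) = _
  rw [hpoint, hf.apply_subordinationPoint hs ht hq2]
  exact subordinationPoint_add_mul_sub_subordinationSqrt hs.ne' hst.ne'
end

section
/- Let s, t > 0 and let G(z) = (z - √(z² - 4s))/(2s) be the Cauchy transform of the semicircular law of variance s, with the branch as above. Set J_t(z) = z - tG(z) and H_t(z) = z + tG(z), so J_t(z) = 2z - H_t(z). For q ∈ ℝ with |q| ≤ 2√(s+t) and z_q = ((2s+t)q + it√(4(s+t) - q²))/(2(s+t)), one has J_t(z_q) = (sq + it√(4(s+t) - q²))/(s+t). In particular, as q ranges over [-2√(s+t), 2√(s+t)], J_t(z_q) traces the upper half of the ellipse with semi-axes 2s/√(s+t) (horizontal) and 2t/√(s+t) (vertical). -/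
/-!
Squaring shows that `√(z_q² - 4s)` is `±w_q` with `w_q = (tq + i(2s+t)√(4(s+t)-q²))/(2(s+t))`,
and `J_t(z_q) = (sq + it√(4(s+t)-q²))/(s+t)` for the sign `+`. The sign is fixed by continuation
along the vertical ray from `z_q` to `i∞`: on it the explicit root `z (1 - 4s/z²)^(1/2)` (principal
power) is continuous and nonvanishing, so the quotient of the two roots is a continuous `±1`-valued
function, hence constant, and it tends to `1` at infinity. At `z_q` the explicit root is `w_q`
because `Re (w_q / z_q) > 0`. The ellipse equation reduces to `q² + (4(s+t) - q²) = 4(s+t)`.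
-/

open Filter Topology Set Bornology Complex

theorem IsPreconnected.eqOn_of_sq_eq_of_tendsto_div {α 𝕜 : Type*} [TopologicalSpace α]
    [Field 𝕜] [TopologicalSpace 𝕜] [T2Space 𝕜] [ContinuousInv₀ 𝕜] [ContinuousMul 𝕜]
    {S : Set α} {f g : α → 𝕜} {l : Filter α} [l.NeBot]
    (hS : IsPreconnected S) (hf : ContinuousOn f S) (hg : ContinuousOn g S)
    (hsq : EqOn (f ^ 2) (g ^ 2) S) (hg_ne : ∀ {x : α}, x ∈ S → g x ≠ 0)
    (hSl : S ∈ l) (hlim : Tendsto (f / g) l (𝓝 1)) : EqOn f g S := by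
  rcases hS.eq_or_eq_neg_of_sq_eq hf hg hsq hg_ne with h | h
  · exact h
  have hdiv : ∀ᶠ x in l, (-1 : 𝕜) = (f / g) x := by
    filter_upwards [hSl] with x hx
    rw [Pi.div_apply, h hx, Pi.neg_apply, neg_div, div_self (hg_ne hx)]
  have h_neg_one : (-1 : 𝕜) = 1 := tendsto_nhds_unique (tendsto_const_nhds.congr' hdiv) hlim
  intro x hx
  rw [h hx, Pi.neg_apply, neg_eq_neg_one_mul, h_neg_one, one_mul]

namespace Complex

lemma sq_mem_slitPlane_of_re_pos {x : ℂ} (hx : 0 < x.re) : x ^ 2 ∈ slitPlane := by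
  rw [mem_slitPlane_iff]
  by_cases him : x.im = 0
  · left; simp [sq, him, hx]
  · right
    rw [sq, mul_im, mul_comm x.im, ← two_mul]
    exact mul_ne_zero two_ne_zero (mul_ne_zero hx.ne' him)

lemma one_sub_div_sq_mem_slitPlane {c : ℝ} (hc : 0 ≤ c) {z : ℂ} (hz : 0 < z.im) :
    1 - c / z ^ 2 ∈ slitPlane := by
  rw [mem_slitPlane_iff]
  have hn : 0 < normSq (z ^ 2) := normSq_pos.2 (pow_ne_zero 2 (fun h => by simp [h] at hz))
  have hre : (1 - c / z ^ 2).re = 1 - c * (z.re ^ 2 - z.im ^ 2) / normSq (z ^ 2) := by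
    simp [div_re, sq]
  have him : (1 - c / z ^ 2).im = 2 * (c * z.re) * z.im / normSq (z ^ 2) := by
    simp [div_im, sq]
    ring
  rcases eq_or_ne (c * z.re) 0 with h | h
  · have hnum : c * (z.re ^ 2 - z.im ^ 2) ≤ 0 := by
      nlinarith [mul_nonneg hc (sq_nonneg z.im), congrArg (· * z.re) h]
    left
    rw [hre]
    linarith [div_nonpos_of_nonpos_of_nonneg hnum hn.le]
  · right
    rw [him]
    exact div_ne_zero (mul_ne_zero (mul_ne_zero two_ne_zero h) hz.ne') hn.ne'

end Complex

noncomputable def sqrtSqSub (c : ℝ) (z : ℂ) : ℂ := z * (1 - c / z ^ 2) ^ (2⁻¹ : ℂ)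

lemma sqrtSqSub_sq (c : ℝ) {z : ℂ} (hz : z ≠ 0) : sqrtSqSub c z ^ 2 = z ^ 2 - c := by
  rw [sqrtSqSub, mul_pow, cpow_ofNat_inv_pow]
  field_simp

lemma sqrtSqSub_ne_zero {c : ℝ} {z : ℂ} (hz : z ≠ 0) (hslit : 1 - c / z ^ 2 ∈ slitPlane) :
    sqrtSqSub c z ≠ 0 :=
  mul_ne_zero hz fun h => slitPlane_ne_zero hslit ((cpow_eq_zero_iff _ _).1 h).1

lemma continuousAt_sqrtSqSub {c : ℝ} {z : ℂ} (hz : z ≠ 0) (hslit : 1 - c / z ^ 2 ∈ slitPlane) :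
    ContinuousAt (sqrtSqSub c) z := by
  have hinner : ContinuousAt (fun w : ℂ => 1 - c / w ^ 2) z := by
    fun_prop (disch := exact pow_ne_zero 2 hz)
  exact continuousAt_id.mul
    ((continuousAt_cpow_const hslit).comp (f := fun w : ℂ => 1 - c / w ^ 2) hinner)

lemma tendsto_sqrtSqSub_div_cobounded (c : ℝ) :
    Tendsto (fun z => sqrtSqSub c z / z) (cobounded ℂ) (𝓝 1) := by
  have hlim : Tendsto (fun z : ℂ => 1 - c * z⁻¹ ^ 2) (cobounded ℂ) (𝓝 (1 - c * (0 : ℂ) ^ 2)) :=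
    tendsto_const_nhds.sub ((tendsto_inv₀_cobounded.pow 2).const_mul _)
  rw [zero_pow two_ne_zero, mul_zero, sub_zero] at hlim
  have := ((continuousAt_cpow_const (b := 2⁻¹) one_mem_slitPlane).tendsto.comp hlim)
  rw [one_cpow] at this
  refine this.congr' ?_
  filter_upwards [eventually_ne_cobounded 0] with z hz
  simp only [Function.comp_apply, sqrtSqSub, inv_pow, ← div_eq_mul_inv, mul_div_cancel_left₀ _ hz]

lemma one_sub_div_sq_eq_div_sq {c : ℝ} {z w : ℂ} (hz : z ≠ 0) (hw : w ^ 2 = z ^ 2 - c) :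
    1 - c / z ^ 2 = (w / z) ^ 2 := by
  rw [div_pow, hw]; field_simp

lemma sqrtSqSub_eq {c : ℝ} {z w : ℂ} (hw : w ^ 2 = z ^ 2 - c) (hre : 0 < (w / z).re) :
    sqrtSqSub c z = w := by
  have hz : z ≠ 0 := by rintro rfl; simp at hre
  rw [sqrtSqSub, one_sub_div_sq_eq_div_sq hz hw, sq_cpow_two_inv hre]
  field_simp

theorem eq_sqrtSqSub_of_continuousOn {c : ℝ} (hc : 0 ≤ c) {sq : ℂ → ℂ}
    (hsq_sq : ∀ z : ℂ, 0 ≤ z.im → sq z ^ 2 = z ^ 2 - c)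
    (hsq_cont : ContinuousOn sq {z : ℂ | 0 ≤ z.im})
    (hsq_asymp : Tendsto (fun z => sq z / z) (cobounded ℂ ⊓ 𝓟 {z : ℂ | 0 ≤ z.im}) (𝓝 1))
    {z : ℂ} (hz : 0 ≤ z.im) (hz0 : z ≠ 0) (hslit : 1 - c / z ^ 2 ∈ slitPlane) :
    sq z = sqrtSqSub c z := by
  set ray : ℝ → ℂ := fun y => z + y * I
  have ray_im (y : ℝ) : (ray y).im = z.im + y := by simp [ray]
  have ray_cont : Continuous ray := by fun_prop
  have ray_maps : MapsTo ray (Ici 0) {z | 0 ≤ z.im} := fun y (hy : 0 ≤ y) => by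
    simp only [mem_ofPred_eq, ray_im]; linarith
  have ray_off_cut : ∀ y ∈ Ici (0 : ℝ), ray y ≠ 0 ∧ 1 - c / ray y ^ 2 ∈ slitPlane := by
    rintro y (hy : 0 ≤ y)
    rcases hy.eq_or_lt with rfl | hy
    · simpa [ray] using ⟨hz0, hslit⟩
    · have him : 0 < (ray y).im := by rw [ray_im]; linarith
      exact ⟨fun h => by simp [h] at him, one_sub_div_sq_mem_slitPlane hc him⟩
  have ray_tendsto : Tendsto ray atTop (cobounded ℂ ⊓ 𝓟 {z | 0 ≤ z.im}) := by
    refine tendsto_inf.2 ⟨tendsto_norm_atTop_iff_cobounded.1 ?_,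
      tendsto_principal.2 (mem_of_superset (Ici_mem_atTop 0) ray_maps)⟩
    refine tendsto_atTop_mono (fun y => ?_) tendsto_id
    calc y ≤ (ray y).im := by rw [ray_im]; linarith
      _ ≤ ‖ray y‖ := im_le_norm _
  have hratio : Tendsto (sq ∘ ray / sqrtSqSub c ∘ ray) atTop (𝓝 1) := by
    have := (hsq_asymp.comp ray_tendsto).div
      ((tendsto_sqrtSqSub_div_cobounded c).comp (ray_tendsto.mono_right inf_le_left)) one_ne_zero
    rw [div_one] at this
    refine this.congr' ?_
    filter_upwards [Ici_mem_atTop 0] with y hy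
    exact div_div_div_cancel_right₀ (ray_off_cut y hy).1 _ _
  have heq := isPreconnected_Ici.eqOn_of_sq_eq_of_tendsto_div
    (hsq_cont.comp ray_cont.continuousOn ray_maps)
    (fun y hy => ((continuousAt_sqrtSqSub (ray_off_cut y hy).1 (ray_off_cut y hy).2).comp
      ray_cont.continuousAt).continuousWithinAt)
    (fun y hy => by
      simp only [Pi.pow_apply, Function.comp_apply, hsq_sq _ (ray_maps hy),
        sqrtSqSub_sq c (ray_off_cut y hy).1])
    (fun hy => sqrtSqSub_ne_zero (ray_off_cut _ hy).1 (ray_off_cut _ hy).2) (Ici_mem_atTop 0) hratio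
  simpa [ray] using heq (mem_Ici.2 le_rfl)

theorem eq_of_sq_eq_of_re_div_pos {c : ℝ} (hc : 0 ≤ c) {sq : ℂ → ℂ}
    (hsq_sq : ∀ z : ℂ, 0 ≤ z.im → sq z ^ 2 = z ^ 2 - c)
    (hsq_cont : ContinuousOn sq {z : ℂ | 0 ≤ z.im})
    (hsq_asymp : Tendsto (fun z => sq z / z) (cobounded ℂ ⊓ 𝓟 {z : ℂ | 0 ≤ z.im}) (𝓝 1))
    {z w : ℂ} (hz : 0 ≤ z.im) (hw : w ^ 2 = z ^ 2 - c) (hre : 0 < (w / z).re) : sq z = w := by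
  have hz0 : z ≠ 0 := by rintro rfl; simp at hre
  have hslit : 1 - c / z ^ 2 ∈ slitPlane := by
    rw [one_sub_div_sq_eq_div_sq hz0 hw]; exact sq_mem_slitPlane_of_re_pos hre
  rw [eq_sqrtSqSub_of_continuousOn hc hsq_sq hsq_cont hsq_asymp hz hz0 hslit, sqrtSqSub_eq hw hre]

section SemicircleEllipse

variable {s t q r : ℝ}

/- The paper's point `z_q`, and `w_q = √(z_q² - 4s)` for the branch asymptotic to `z`; the
argument `r` stands for `√(4(s+t) - q²)`. -/
noncomputable def zq (s t q r : ℝ) : ℂ :=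
  (((2 * s + t) * q : ℝ) : ℂ) / (2 * ((s : ℂ) + t)) + I * ((t * r : ℝ) : ℂ) / (2 * ((s : ℂ) + t))

noncomputable def wq (s t q r : ℝ) : ℂ :=
  ((t * q : ℝ) : ℂ) / (2 * ((s : ℂ) + t)) + I * (((2 * s + t) * r : ℝ) : ℂ) / (2 * ((s : ℂ) + t))

lemma two_mul_add_eq_ofReal (s t : ℝ) : 2 * ((s : ℂ) + t) = ((2 * (s + t) : ℝ) : ℂ) := by
  push_cast; ring

lemma zq_eq_mk (s t q r : ℝ) :
    zq s t q r = ⟨(2 * s + t) * q / (2 * (s + t)), t * r / (2 * (s + t))⟩ := by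
  simp only [zq, two_mul_add_eq_ofReal]
  apply Complex.ext <;> simp [-ofReal_mul, -ofReal_add]

lemma wq_eq_mk (s t q r : ℝ) :
    wq s t q r = ⟨t * q / (2 * (s + t)), (2 * s + t) * r / (2 * (s + t))⟩ := by
  simp only [wq, two_mul_add_eq_ofReal]
  apply Complex.ext <;> simp [-ofReal_mul, -ofReal_add]

lemma wq_sq (hst : s + t ≠ 0) (hr : r ^ 2 = 4 * (s + t) - q ^ 2) :
    wq s t q r ^ 2 = zq s t q r ^ 2 - ((4 * s : ℝ) : ℂ) := by
  have hst' : (s : ℂ) + t ≠ 0 := by exact_mod_cast hst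
  have hr' : (r : ℂ) ^ 2 = 4 * (s + t) - q ^ 2 := by exact_mod_cast hr
  simp only [zq, wq]
  field_simp
  push_cast
  linear_combination (-4 * s * (s + t) : ℂ) * hr' + ((2 * s + t) ^ 2 - t ^ 2 : ℂ) * r ^ 2 * I_sq

lemma wq_re_mul_zq_re_add_wq_im_mul_zq_im (hst : s + t ≠ 0) (hr : r ^ 2 = 4 * (s + t) - q ^ 2) :
    (wq s t q r).re * (zq s t q r).re + (wq s t q r).im * (zq s t q r).im
      = t * (2 * s + t) / (s + t) := by
  rw [zq_eq_mk, wq_eq_mk]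
  field_simp
  linear_combination t * (2 * s + t) * hr

lemma re_wq_div_zq_pos (hs : 0 < s) (ht : 0 < t) (hr : r ^ 2 = 4 * (s + t) - q ^ 2) :
    0 < (wq s t q r / zq s t q r).re := by
  have hS : 0 < s + t := by linarith
  have hdot := wq_re_mul_zq_re_add_wq_im_mul_zq_im hS.ne' hr
  have hpos : 0 < t * (2 * s + t) / (s + t) := by positivity
  have hz : zq s t q r ≠ 0 := by
    intro h
    rw [h, zero_re, zero_im, mul_zero, mul_zero, add_zero] at hdot
    exact hpos.ne hdot
  rw [div_re, ← add_div, hdot]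
  exact div_pos hpos (normSq_pos.2 hz)

lemma zq_sub_mul_sub_wq (hs : s ≠ 0) (hst : s + t ≠ 0) :
    zq s t q r - t * ((zq s t q r - wq s t q r) / (2 * s))
      = ((s * q : ℝ) : ℂ) / ((s : ℂ) + t) + I * ((t * r : ℝ) : ℂ) / ((s : ℂ) + t) := by
  have hs' : (s : ℂ) ≠ 0 := by exact_mod_cast hs
  have hst' : (s : ℂ) + t ≠ 0 := by exact_mod_cast hst
  simp only [zq, wq]
  field_simp
  push_cast
  ring

lemma ellipse_eq_one (hs : 0 < s) (ht : 0 < t) (hr : r ^ 2 = 4 * (s + t) - q ^ 2) {w : ℂ}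
    (hw : w = ((s * q : ℝ) : ℂ) / ((s : ℂ) + t) + I * ((t * r : ℝ) : ℂ) / ((s : ℂ) + t)) :
    (w.re / (2 * s / Real.sqrt (s + t))) ^ 2 + (w.im / (2 * t / Real.sqrt (s + t))) ^ 2 = 1 := by
  have hst : 0 < s + t := by linarith
  have hre : w.re = s * q / (s + t) := by
    rw [hw, ← ofReal_add]; simp [-ofReal_mul, -ofReal_add]
  have him : w.im = t * r / (s + t) := by
    rw [hw, ← ofReal_add]; simp [-ofReal_mul, -ofReal_add]
  have hsqrt : Real.sqrt (s + t) ^ 2 = s + t := Real.sq_sqrt hst.le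
  rw [hre, him]
  field_simp
  linear_combination (q ^ 2 + r ^ 2) * hsqrt + (s + t) * hr

end SemicircleEllipse

/-- With `G` the Cauchy transform of the semicircular law of variance `s`
(branch of `√(z²-4s)` on the closed upper half-plane as in Statement 10) and
`J_t(z) = z - tG(z)`, for `|q| ≤ 2√(s+t)` and
`z_q = ((2s+t)q + it√(4(s+t)-q²))/(2(s+t))` one has
`J_t(z_q) = (sq + it√(4(s+t)-q²))/(s+t)`, and this point lies on the ellipse with
semi-axes `2s/√(s+t)` and `2t/√(s+t)`. -/
theorem stmt_11 (s t : ℝ) (hs : 0 < s) (ht : 0 < t)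
    (sq : ℂ → ℂ)
    (hsq_sq : ∀ z : ℂ, 0 ≤ z.im → sq z ^ 2 = z ^ 2 - 4 * (s : ℂ))
    (hsq_cont : ContinuousOn sq {z : ℂ | 0 ≤ z.im})
    (hsq_asymp : Tendsto (fun z => sq z / z)
      (comap (fun z : ℂ => ‖z‖) atTop ⊓ Filter.principal {z : ℂ | 0 ≤ z.im}) (nhds 1))
    (q : ℝ) (hq : |q| ≤ 2 * Real.sqrt (s + t)) :
    ∀ w : ℂ,
      w = (fun z : ℂ => z - (t : ℂ) * ((z - sq z) / (2 * (s : ℂ))))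
        ((((2 * s + t) * q : ℝ) : ℂ) / (2 * ((s : ℂ) + t))
          + Complex.I * ((t * Real.sqrt (4 * (s + t) - q ^ 2) : ℝ) : ℂ) / (2 * ((s : ℂ) + t))) →
      w = ((s * q : ℝ) : ℂ) / ((s : ℂ) + t)
            + Complex.I * ((t * Real.sqrt (4 * (s + t) - q ^ 2) : ℝ) : ℂ) / ((s : ℂ) + t) ∧
      (w.re / (2 * s / Real.sqrt (s + t))) ^ 2
        + (w.im / (2 * t / Real.sqrt (s + t))) ^ 2 = 1 := by
  intro w hw
  have hS : 0 < s + t := by linarith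
  have hq2 : q ^ 2 ≤ 2 ^ 2 * (s + t) := by
    simpa only [sq_abs, mul_pow, Real.sq_sqrt hS.le] using pow_le_pow_left₀ (abs_nonneg q) hq 2
  set r := Real.sqrt (4 * (s + t) - q ^ 2)
  have hr : r ^ 2 = 4 * (s + t) - q ^ 2 := Real.sq_sqrt (by linarith)
  have hsq : sq (zq s t q r) = wq s t q r :=
    eq_of_sq_eq_of_re_div_pos (by positivity) (fun z hz => by push_cast; exact hsq_sq z hz)
      hsq_cont (by simpa using hsq_asymp) (by rw [zq_eq_mk]; positivity)
      (wq_sq hS.ne' hr) (re_wq_div_zq_pos hs ht hr)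
  have hJ : w = ((s * q : ℝ) : ℂ) / ((s : ℂ) + t) + I * ((t * r : ℝ) : ℂ) / ((s : ℂ) + t) := by
    change w = zq s t q r - t * ((zq s t q r - sq (zq s t q r)) / (2 * s)) at hw
    rw [hw, hsq, zq_sub_mul_sub_wq hs.ne' hS.ne']
  exact ⟨hJ, ellipse_eq_one hs ht hr hJ⟩
end

section
/- Let μ be the uniform distribution on [-1, 1], t > 0, a₀ ∈ ℝ, v > 0. Then ∫ dμ(x)/((a₀-x)² + v²) = (arctan((1-a₀)/v) + arctan((1+a₀)/v))/(2v). Moreover, if this quantity equals 1/t and 2v/t < π, then a₀² = 2v·cot(2v/t) + 1 - v². -/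
open MeasureTheory
open scoped ENNReal

/-!
An antiderivative of `1 / ((a - x)² + v²)` is `arctan ((x - a) / v) / v`, which gives the integral.
For the second claim, `1 / t` equal to the integral means `2v / t = arctan A + arctan B` with
`A = (1 - a₀) / v` and `B = (1 + a₀) / v`, and the addition formulas for `sin` and `cos` give
`cot (arctan A + arctan B) = (1 - A B) / (A + B)`, with `A + B = 2 / v` and `A B = (1 - a₀²) / v²`.
-/

namespace Real

theorem cot_arctan_add_arctan (A B : ℝ) :
    cot (arctan A + arctan B) = (1 - A * B) / (A + B) := by
  have hA : 0 < √(1 + A ^ 2) := sqrt_pos.2 (by positivity)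
  have hB : 0 < √(1 + B ^ 2) := sqrt_pos.2 (by positivity)
  rw [cot_eq_cos_div_sin, cos_add, sin_add, cos_arctan, sin_arctan, cos_arctan, sin_arctan]
  field_simp

theorem hasDerivAt_arctan_sub_div_div {a v : ℝ} (hv : v ≠ 0) (x : ℝ) :
    HasDerivAt (fun y => arctan ((y - a) / v) / v) (1 / ((a - x) ^ 2 + v ^ 2)) x := by
  have hinner : HasDerivAt (fun y => (y - a) / v) (1 / v) x := by
    simpa using ((hasDerivAt_id x).sub_const a).div_const v
  refine (((hasDerivAt_arctan _).comp x hinner).div_const v).congr_deriv ?_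
  have : 1 + ((x - a) / v) ^ 2 ≠ 0 := by positivity
  field_simp
  ring

theorem integral_one_div_sq_add_sq {a v : ℝ} (hv : v ≠ 0) (b c : ℝ) :
    ∫ x in b..c, 1 / ((a - x) ^ 2 + v ^ 2)
      = (arctan ((c - a) / v) - arctan ((b - a) / v)) / v := by
  have hcont : Continuous fun x : ℝ => 1 / ((a - x) ^ 2 + v ^ 2) :=
    continuous_const.div (by fun_prop) fun x => by positivity
  rw [intervalIntegral.integral_eq_sub_of_hasDerivAt
    (fun x _ => hasDerivAt_arctan_sub_div_div hv x) (hcont.intervalIntegrable _ _)]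
  ring

end Real

theorem integral_smul_restrict_Icc {a b : ℝ} (hab : a ≤ b) (c : ℝ≥0∞) (f : ℝ → ℝ) :
    ∫ x, f x ∂(c • volume.restrict (Set.Icc a b)) = c.toReal * ∫ x in a..b, f x := by
  rw [integral_smul_measure, integral_Icc_eq_integral_Ioc, intervalIntegral.integral_of_le hab,
    smul_eq_mul]

theorem stmt_12_general (t a₀ v : ℝ) (hv : 0 < v)
    (μ : Measure ℝ) (hμ : μ = (2 : ℝ≥0∞)⁻¹ • volume.restrict (Set.Icc (-1 : ℝ) 1)) :
    (∫ x, 1 / ((a₀ - x) ^ 2 + v ^ 2) ∂μ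
      = (Real.arctan ((1 - a₀) / v) + Real.arctan ((1 + a₀) / v)) / (2 * v)) ∧
    ((∫ x, 1 / ((a₀ - x) ^ 2 + v ^ 2) ∂μ = 1 / t) → 2 * v / t < Real.pi →
      a₀ ^ 2 = 2 * v * Real.cot (2 * v / t) + 1 - v ^ 2) := by
  have hv0 : v ≠ 0 := hv.ne'
  have hμint : ∫ x, 1 / ((a₀ - x) ^ 2 + v ^ 2) ∂μ
      = (Real.arctan ((1 - a₀) / v) + Real.arctan ((1 + a₀) / v)) / (2 * v) := by
    rw [hμ, integral_smul_restrict_Icc (by norm_num), Real.integral_one_div_sq_add_sq hv0,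
      show (-1 - a₀) / v = -((1 + a₀) / v) by ring, Real.arctan_neg]
    simp only [ENNReal.toReal_inv, ENNReal.toReal_ofNat]
    field_simp
    ring
  refine ⟨hμint, fun heq _ => ?_⟩
  have hangle : 2 * v / t = Real.arctan ((1 - a₀) / v) + Real.arctan ((1 + a₀) / v) := by
    rw [div_eq_mul_one_div, ← heq, hμint]
    field_simp
  rw [hangle, Real.cot_arctan_add_arctan]
  field_simp
  ring

/-- For `μ` the uniform distribution on `[-1,1]`, `v > 0`:
`∫ dμ(x)/((a₀-x)²+v²) = (arctan((1-a₀)/v) + arctan((1+a₀)/v))/(2v)`, and if this equals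
`1/t` with `2v/t < π` then `a₀² = 2v cot(2v/t) + 1 - v²`. -/
theorem stmt_12 (t a₀ v : ℝ) (ht : 0 < t) (hv : 0 < v)
    (μ : Measure ℝ) (hμ : μ = (2 : ℝ≥0∞)⁻¹ • volume.restrict (Set.Icc (-1 : ℝ) 1)) :
    (∫ x, 1 / ((a₀ - x) ^ 2 + v ^ 2) ∂μ
      = (Real.arctan ((1 - a₀) / v) + Real.arctan ((1 + a₀) / v)) / (2 * v)) ∧
    ((∫ x, 1 / ((a₀ - x) ^ 2 + v ^ 2) ∂μ = 1 / t) → 2 * v / t < Real.pi →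
      a₀ ^ 2 = 2 * v * Real.cot (2 * v / t) + 1 - v ^ 2) :=
  stmt_12_general t a₀ v hv μ hμ
end

section
/- Let s, t > 0 and let H_t(z) = z + t·(z - √(z² - 4s))/(2s) on the upper half-plane, with the branch of √ as above. Then for w in the closed upper half-plane, the function H_t⁻¹(w) = ((2s+t)w + t√(w² - 4(s+t)))/(2(s+t)) satisfies H_t(H_t⁻¹(w)) = w, where √(w² - 4(s+t)) uses the analogous branch (asymptotic to w, with nonneg imaginary part on the boundary values from above). -/
/-!
Put `Z = H_t⁻¹(w)`, `q = √(w² - 4(s+t))` and `C = (t w + (2s+t) q) / (2(s+t))`. A direct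
computation gives `Z² - 4s = C²` and `Z + t (Z - C) / (2s) = w`, so everything reduces to the
choice of sign `√(Z² - 4s) = C`. Both branches have nonnegative imaginary part on the closed
upper half-plane: for `Im z > 0` and `c ≥ 0`, `z² - 4c` is never a nonnegative real, so `Im √`
cannot vanish there, and the asymptotics make it positive far up the imaginary axis. Hence for
`Im w > 0` we get `Im C > 0`, which fixes the sign, and continuity carries the identity over to
the real axis.
-/

open Filter Complex Topology Set

section UpperHalfPlaneRoot

variable {c : ℝ} {f : ℂ → ℂ}

lemma im_ne_zero_of_sq_eq_sq_sub (hc : 0 ≤ c) {z w : ℂ} (hz : 0 < z.im)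
    (hw : w ^ 2 = z ^ 2 - 4 * c) : w.im ≠ 0 := by
  intro hw0
  have hre := congrArg re hw
  have him := congrArg im hw
  simp only [pow_two, mul_re, mul_im, sub_re, sub_im, hw0, re_ofNat, im_ofNat, ofReal_re,
    ofReal_im] at hre him
  have hzre : z.re = 0 := by nlinarith
  rw [hzre] at hre
  nlinarith

lemma exists_im_pos_of_tendsto_div_self
    (hf : Tendsto (fun z => f z / z)
      (comap (fun z : ℂ => ‖z‖) atTop ⊓ 𝓟 {z : ℂ | 0 ≤ z.im}) (𝓝 1)) :
    ∃ z : ℂ, 0 < z.im ∧ 0 < (f z).im := by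
  have hI : Tendsto (fun y : ℝ => (y : ℂ) * I) atTop
      (comap (fun z : ℂ => ‖z‖) atTop ⊓ 𝓟 {z : ℂ | 0 ≤ z.im}) := by
    refine tendsto_inf.2 ⟨tendsto_comap_iff.2 ?_, tendsto_principal.2 ?_⟩
    · simpa [Function.comp_def] using tendsto_abs_atTop_atTop
    · filter_upwards [eventually_ge_atTop 0] with y hy
      simpa using hy
  have hre : ∀ᶠ y : ℝ in atTop, 0 < (f (y * I) / (y * I)).re :=
    (hf.comp hI).eventually ((isOpen_lt continuous_const continuous_re).mem_nhds (by simp))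
  obtain ⟨y, hfy, hy⟩ := (hre.and (eventually_gt_atTop 0)).exists
  refine ⟨y * I, by simpa using hy, ?_⟩
  have hyI : (y : ℂ) * I ≠ 0 := mul_ne_zero (ofReal_ne_zero.2 hy.ne') I_ne_zero
  rw [← div_mul_cancel₀ (f (y * I)) hyI]
  simpa [mul_im] using mul_pos hfy hy

lemma im_pos_of_sq_eq (hc : 0 ≤ c) (hsq : ∀ z : ℂ, 0 < z.im → f z ^ 2 = z ^ 2 - 4 * c)
    (hcont : ContinuousOn f {z : ℂ | 0 < z.im}) (hex : ∃ z : ℂ, 0 < z.im ∧ 0 < (f z).im)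
    {z : ℂ} (hz : 0 < z.im) : 0 < (f z).im := by
  obtain ⟨z₀, hz₀, hf₀⟩ := hex
  by_contra! hle
  obtain ⟨z₁, hz₁, hf₁⟩ := (convex_halfSpace_im_gt 0).isPreconnected.intermediate_value hz hz₀
    (continuous_im.comp_continuousOn hcont) ⟨hle, hf₀.le⟩
  exact im_ne_zero_of_sq_eq_sq_sub hc hz₁ (hsq z₁ hz₁) hf₁

lemma im_nonneg_of_sq_eq (hc : 0 ≤ c) (hsq : ∀ z : ℂ, 0 ≤ z.im → f z ^ 2 = z ^ 2 - 4 * c)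
    (hcont : ContinuousOn f {z : ℂ | 0 ≤ z.im})
    (hasymp : Tendsto (fun z => f z / z)
      (comap (fun z : ℂ => ‖z‖) atTop ⊓ 𝓟 {z : ℂ | 0 ≤ z.im}) (𝓝 1))
    (z : ℂ) (hz : 0 ≤ z.im) : 0 ≤ (f z).im := by
  have hopen : {z : ℂ | 0 < z.im} ⊆ {z : ℂ | 0 ≤ z.im} := fun z (hz : 0 < z.im) => hz.le
  have hpos : ∀ z : ℂ, 0 < z.im → 0 < (f z).im := fun z hz =>
    im_pos_of_sq_eq hc (fun z hz => hsq z hz.le) (hcont.mono hopen)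
      (exists_im_pos_of_tendsto_div_self hasymp) hz
  have hzcl : z ∈ closure {z : ℂ | 0 < z.im} := by rwa [closure_setOfPred_lt_im]
  exact ContinuousWithinAt.closure_le hzcl continuousWithinAt_const
    (((continuous_im.comp_continuousOn hcont) z hz).mono hopen) fun y hy => (hpos y hy).le

end UpperHalfPlaneRoot

lemma eq_of_sq_eq_sq_of_im_nonneg_of_im_pos {a b : ℂ} (h : a ^ 2 = b ^ 2) (ha : 0 ≤ a.im)
    (hb : 0 < b.im) : a = b := by
  rcases sq_eq_sq_iff_eq_or_eq_neg.1 h with h | h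
  · exact h
  · rw [h, neg_im] at ha
    linarith

section InverseMap

variable (s t : ℝ)

/-- With `q = √(w² - 4(s+t))`, `hInv s t w q` is `H_t⁻¹(w)` and `hInvRoot s t w q` is the
square root of `H_t⁻¹(w)² - 4s` on the branch of the upper half-plane. -/
noncomputable def hInv (w q : ℂ) : ℂ :=
  (((2 * s + t : ℝ) : ℂ) * w + (t : ℂ) * q) / (2 * ((s : ℂ) + t))

noncomputable def hInvRoot (w q : ℂ) : ℂ :=
  ((t : ℂ) * w + ((2 * s + t : ℝ) : ℂ) * q) / (2 * ((s : ℂ) + t))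

lemma two_mul_add_ofReal : 2 * ((s : ℂ) + t) = ((2 * (s + t) : ℝ) : ℂ) := by
  push_cast; ring

lemma im_hInv (w q : ℂ) :
    (hInv s t w q).im = ((2 * s + t) * w.im + t * q.im) / (2 * (s + t)) := by
  rw [hInv, two_mul_add_ofReal, div_ofReal_im]
  simp

lemma im_hInvRoot (w q : ℂ) :
    (hInvRoot s t w q).im = (t * w.im + (2 * s + t) * q.im) / (2 * (s + t)) := by
  rw [hInvRoot, two_mul_add_ofReal, div_ofReal_im]
  simp

variable {s t}

lemma hInv_sq_sub (hst : s + t ≠ 0) {w q : ℂ} (hq : q ^ 2 = w ^ 2 - 4 * ((s : ℂ) + t)) :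
    hInv s t w q ^ 2 - 4 * s = hInvRoot s t w q ^ 2 := by
  have : (s : ℂ) + t ≠ 0 := by exact_mod_cast hst
  simp only [hInv, hInvRoot]
  field_simp
  push_cast
  linear_combination (-4 * (s : ℂ) * (s + t)) * hq

lemma hInv_add_sub_hInvRoot (hs : s ≠ 0) (hst : s + t ≠ 0) (w q : ℂ) :
    hInv s t w q + t * ((hInv s t w q - hInvRoot s t w q) / (2 * s)) = w := by
  have : (s : ℂ) + t ≠ 0 := by exact_mod_cast hst
  have : (s : ℂ) ≠ 0 := by exact_mod_cast hs
  simp only [hInv, hInvRoot]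
  field_simp
  push_cast
  ring

end InverseMap

lemma comp_hInv_eqOn_hInvRoot {s t : ℝ} (hs : 0 < s) (ht : 0 < t) {f g : ℂ → ℂ}
    (hf_sq : ∀ z : ℂ, 0 ≤ z.im → f z ^ 2 = z ^ 2 - 4 * (s : ℂ))
    (hf_cont : ContinuousOn f {z : ℂ | 0 ≤ z.im}) (hf_im : ∀ z : ℂ, 0 ≤ z.im → 0 ≤ (f z).im)
    (hg_sq : ∀ z : ℂ, 0 ≤ z.im → g z ^ 2 = z ^ 2 - 4 * ((s : ℂ) + t))
    (hg_cont : ContinuousOn g {z : ℂ | 0 ≤ z.im}) (hg_im : ∀ z : ℂ, 0 ≤ z.im → 0 ≤ (g z).im) :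
    EqOn (fun w => f (hInv s t w (g w))) (fun w => hInvRoot s t w (g w)) {w : ℂ | 0 ≤ w.im} := by
  have hInv_im : ∀ w : ℂ, 0 ≤ w.im → 0 ≤ (hInv s t w (g w)).im := fun w hw => by
    rw [im_hInv]
    have := hg_im w hw
    positivity
  have hopen : EqOn (fun w => f (hInv s t w (g w))) (fun w => hInvRoot s t w (g w))
      {w : ℂ | 0 < w.im} := fun w (hw : 0 < w.im) => by
    refine eq_of_sq_eq_sq_of_im_nonneg_of_im_pos ?_ (hf_im _ (hInv_im w hw.le)) ?_
    · rw [hf_sq _ (hInv_im w hw.le), hInv_sq_sub (add_pos hs ht).ne' (hg_sq w hw.le)]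
    · rw [im_hInvRoot]
      have := hg_im w hw.le
      positivity
  have hInv_cont : ContinuousOn (fun w => hInv s t w (g w)) {w : ℂ | 0 ≤ w.im} := by
    simp only [hInv]
    fun_prop
  have hInvRoot_cont : ContinuousOn (fun w => hInvRoot s t w (g w)) {w : ℂ | 0 ≤ w.im} := by
    simp only [hInvRoot]
    fun_prop
  exact hopen.of_subset_closure (hf_cont.comp hInv_cont hInv_im) hInvRoot_cont
    (fun w (hw : 0 < w.im) => hw.le) (closure_setOfPred_lt_im 0).ge

/-- With `H_t(z) = z + t(z - √(z²-4s))/(2s)` and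
`H_t⁻¹(w) = ((2s+t)w + t√(w²-4(s+t)))/(2(s+t))`, where both square roots denote the
branches on the closed upper half-plane (continuous there, squaring to the correct value,
and asymptotic to `z` at infinity), one has `H_t(H_t⁻¹(w)) = w` for `w` in the closed
upper half-plane. -/
theorem stmt_18 (s t : ℝ) (hs : 0 < s) (ht : 0 < t)
    (sq1 sq2 : ℂ → ℂ)
    (h1_sq : ∀ z : ℂ, 0 ≤ z.im → sq1 z ^ 2 = z ^ 2 - 4 * (s : ℂ))
    (h1_cont : ContinuousOn sq1 {z : ℂ | 0 ≤ z.im})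
    (h1_asymp : Tendsto (fun z => sq1 z / z)
      (comap (fun z : ℂ => ‖z‖) atTop ⊓ Filter.principal {z : ℂ | 0 ≤ z.im}) (nhds 1))
    (h2_sq : ∀ z : ℂ, 0 ≤ z.im → sq2 z ^ 2 = z ^ 2 - 4 * ((s : ℂ) + t))
    (h2_cont : ContinuousOn sq2 {z : ℂ | 0 ≤ z.im})
    (h2_asymp : Tendsto (fun z => sq2 z / z)
      (comap (fun z : ℂ => ‖z‖) atTop ⊓ Filter.principal {z : ℂ | 0 ≤ z.im}) (nhds 1))
    (w : ℂ) (hw : 0 ≤ w.im) :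
    (fun z : ℂ => z + (t : ℂ) * ((z - sq1 z) / (2 * (s : ℂ))))
      ((((2 * s + t : ℝ) : ℂ) * w + (t : ℂ) * sq2 w) / (2 * ((s : ℂ) + t))) = w := by
  have h2_sq' : ∀ z : ℂ, 0 ≤ z.im → sq2 z ^ 2 = z ^ 2 - 4 * ((s + t : ℝ) : ℂ) := by
    push_cast
    exact h2_sq
  have h1_im := im_nonneg_of_sq_eq hs.le h1_sq h1_cont h1_asymp
  have h2_im := im_nonneg_of_sq_eq (add_pos hs ht).le h2_sq' h2_cont h2_asymp
  have hbranch : sq1 (hInv s t w (sq2 w)) = hInvRoot s t w (sq2 w) :=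
    comp_hInv_eqOn_hInvRoot hs ht h1_sq h1_cont h1_im h2_sq h2_cont h2_im hw
  change hInv s t w (sq2 w) + t * ((hInv s t w (sq2 w) - sq1 (hInv s t w (sq2 w))) / (2 * s)) = w
  rw [hbranch]
  exact hInv_add_sub_hInvRoot hs.ne' (add_pos hs ht).ne' w (sq2 w)
end
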